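/- A = B: the set of expected system cost values achievable by Problem BiD (optimizing multi-segment bidding curves with nonnegative prices and nonnegative quantities) coincides with the set of expected system cost values achievable by Problem BiD-q (optimizing a single nonnegative bid quantity at zero bid price). -/

import Mathlib

open Finset

/-- Feasibility for the priced day-ahead problem DA(C,W): the non-VRE decision `x`
together with the aggregate VRE dispatch lies in `Y`, and each segment dispatch
lies between `0` and the bid quantity `W k s`. -/
def DAFeasible {n : ℕ} {K S : Type*} [Fintype S]
    (Y : Set ((Fin n → ℝ) × (K → ℝ)))
    (W : K → S → ℝ) (x : Fin n → ℝ) (p : K → S → ℝ) : Prop :=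
  ((x, fun k => ∑ s, p k s) ∈ Y) ∧ ∀ k s, 0 ≤ p k s ∧ p k s ≤ W k s

/-- Optimality for the priced day-ahead problem DA(C,W): feasible and minimizing
`f0 x + Σ_k Σ_s C k s * p k s` over all feasible pairs. -/
def DAOptimal {n : ℕ} {K S : Type*} [Fintype K] [Fintype S]
    (Y : Set ((Fin n → ℝ) × (K → ℝ))) (f0 : (Fin n → ℝ) → ℝ)
    (C W : K → S → ℝ) (x : Fin n → ℝ) (p : K → S → ℝ) : Prop :=
  DAFeasible Y W x p ∧
    ∀ x' p', DAFeasible Y W x' p' →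
      f0 x + ∑ k, ∑ s, C k s * p k s ≤ f0 x' + ∑ k, ∑ s, C k s * p' k s

/-- Feasibility for the quantity-only day-ahead problem DA0(W'). -/
def DA0Feasible {n : ℕ} {K : Type*}
    (Y : Set ((Fin n → ℝ) × (K → ℝ)))
    (W' : K → ℝ) (x : Fin n → ℝ) (q : K → ℝ) : Prop :=
  ((x, q) ∈ Y) ∧ ∀ k, 0 ≤ q k ∧ q k ≤ W' k

/-- Optimality for the quantity-only day-ahead problem DA0(W'): feasible and
minimizing `f0 x` over all feasible pairs. -/
def DA0Optimal {n : ℕ} {K : Type*}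
    (Y : Set ((Fin n → ℝ) × (K → ℝ))) (f0 : (Fin n → ℝ) → ℝ)
    (W' : K → ℝ) (x : Fin n → ℝ) (q : K → ℝ) : Prop :=
  DA0Feasible Y W' x q ∧ ∀ x' q', DA0Feasible Y W' x' q' → f0 x ≤ f0 x'

/-!
An optimal dispatch of DA(C,W) with nonnegative prices stays optimal for DA0 when each bid
quantity is set to the dispatched amount: a competing aggregate dispatch below it is split over
the segments proportionally to the original dispatch, which respects every segment cap and can
only lower the bid cost. Conversely, an optimal dispatch of DA0(W') is optimal for the priced
problem with zero prices and the whole quantity `W'` bid on a single segment.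
-/

lemma exists_nonneg_le_sum_eq {S : Type*} [Fintype S] {p : S → ℝ} (hp : 0 ≤ p) {t : ℝ}
    (ht₀ : 0 ≤ t) (ht : t ≤ ∑ s, p s) : ∃ p' : S → ℝ, 0 ≤ p' ∧ p' ≤ p ∧ ∑ s, p' s = t := by
  have hsum : 0 ≤ ∑ s, p s := sum_nonneg fun s _ => hp s
  rcases hsum.eq_or_lt with hzero | hpos
  · exact ⟨0, le_rfl, hp, by simp [le_antisymm (hzero ▸ ht) ht₀]⟩
  have hratio₀ : 0 ≤ t / ∑ s, p s := div_nonneg ht₀ hsum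
  have hratio₁ : t / ∑ s, p s ≤ 1 := (div_le_one hpos).2 ht
  refine ⟨(t / ∑ s, p s) • p, fun s => mul_nonneg hratio₀ (hp s),
    fun s => mul_le_of_le_one_left (hp s) hratio₁, ?_⟩
  simp only [Pi.smul_apply, smul_eq_mul, ← mul_sum, div_mul_cancel₀ _ hpos.ne']

section

variable {n : ℕ} {K S : Type*} {Y : Set ((Fin n → ℝ) × (K → ℝ))} {f0 : (Fin n → ℝ) → ℝ}

namespace DAFeasible

variable [Fintype S] {W : K → S → ℝ} {x : Fin n → ℝ} {p : K → S → ℝ}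

lemma da0Feasible_sum (h : DAFeasible Y W x p) :
    DA0Feasible Y (fun k => ∑ s, W k s) x (fun k => ∑ s, p k s) :=
  ⟨h.1, fun k => ⟨sum_nonneg fun s _ => (h.2 k s).1, sum_le_sum fun s _ => (h.2 k s).2⟩⟩

lemma da0Feasible_self (h : DAFeasible Y W x p) :
    DA0Feasible Y (fun k => ∑ s, p k s) x (fun k => ∑ s, p k s) :=
  ⟨h.1, fun k => ⟨sum_nonneg fun s _ => (h.2 k s).1, le_rfl⟩⟩

lemma exists_le_of_da0Feasible (h : DAFeasible Y W x p) {x' : Fin n → ℝ} {q' : K → ℝ}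
    (h' : DA0Feasible Y (fun k => ∑ s, p k s) x' q') :
    ∃ p', DAFeasible Y W x' p' ∧ p' ≤ p := by
  choose p' hp'₀ hp'p hp'sum using fun k =>
    exists_nonneg_le_sum_eq (fun s => (h.2 k s).1) (h'.2 k).1 (h'.2 k).2
  have hsum : (fun k => ∑ s, p' k s) = q' := funext hp'sum
  refine ⟨p', ⟨hsum ▸ h'.1, fun k s => ⟨hp'₀ k s, (hp'p k s).trans (h.2 k s).2⟩⟩, hp'p⟩

end DAFeasible

lemma DAOptimal.da0Optimal_sum [Fintype K] [Fintype S] {C W : K → S → ℝ} {x : Fin n → ℝ}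
    {p : K → S → ℝ} (hC : ∀ k s, 0 ≤ C k s) (h : DAOptimal Y f0 C W x p) :
    DA0Optimal Y f0 (fun k => ∑ s, p k s) x (fun k => ∑ s, p k s) := by
  refine ⟨h.1.da0Feasible_self, fun x' q' h' => ?_⟩
  obtain ⟨p', hp'feas, hp'p⟩ := h.1.exists_le_of_da0Feasible h'
  have hcost : ∑ k, ∑ s, C k s * p' k s ≤ ∑ k, ∑ s, C k s * p k s :=
    sum_le_sum fun k _ => sum_le_sum fun s _ => mul_le_mul_of_nonneg_left (hp'p k s) (hC k s)
  linarith [h.2 x' p' hp'feas]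

lemma DA0Optimal.daOptimal_single [Fintype K] [Fintype S] [DecidableEq S] {W' : K → ℝ}
    {x : Fin n → ℝ} {q : K → ℝ} (h : DA0Optimal Y f0 W' x q) (s₀ : S) :
    DAOptimal Y f0 0 (fun k => Pi.single s₀ (W' k)) x (fun k => Pi.single s₀ (q k)) := by
  have hsum (r : K → ℝ) : (fun k => ∑ s, (Pi.single s₀ (r k) : S → ℝ) s) = r :=
    funext fun k => sum_pi_single' s₀ (r k) univ |>.trans (if_pos (mem_univ s₀))
  refine ⟨⟨(hsum q).symm ▸ h.1.1, fun k s => ?_⟩, fun x' p' h' => ?_⟩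
  · exact ⟨Pi.single_nonneg (α := fun _ => ℝ) |>.2 (h.1.2 k).1 s,
      Pi.single_le_single (α := fun _ => ℝ) |>.2 (h.1.2 k).2 s⟩
  · simpa using h.2 x' _ (hsum W' ▸ h'.da0Feasible_sum)

end

/-- A = B: the set of expected system cost values achievable by Problem BiD
coincides with the set achievable by Problem BiD-q (strengthened Theorem 1). -/
theorem BiD_eq_BiDq {n : ℕ} {K S : Type*} [Fintype K] [Fintype S] [Nonempty S]
    (Y : Set ((Fin n → ℝ) × (K → ℝ))) (f0 : (Fin n → ℝ) → ℝ)
    (G : (Fin n → ℝ) × (K → ℝ) → ℝ) :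
    {v : ℝ | ∃ (C W : K → S → ℝ) (x : Fin n → ℝ) (p : K → S → ℝ),
        (∀ k s, 0 ≤ C k s) ∧ (∀ k s, 0 ≤ W k s) ∧ DAOptimal Y f0 C W x p ∧
        v = G (x, fun k => ∑ s, p k s)} =
    {v : ℝ | ∃ (W' : K → ℝ) (x : Fin n → ℝ) (q : K → ℝ),
        (∀ k, 0 ≤ W' k) ∧ DA0Optimal Y f0 W' x q ∧ v = G (x, q)} := by
  classical
  ext v
  constructor
  · rintro ⟨C, W, x, p, hC, -, hopt, rfl⟩
    exact ⟨_, x, _, fun k => (hopt.1.da0Feasible_self.2 k).1, hopt.da0Optimal_sum hC, rfl⟩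
  · rintro ⟨W', x, q, hW', hopt, rfl⟩
    obtain ⟨s₀⟩ := ‹Nonempty S›
    refine ⟨0, fun k => Pi.single s₀ (W' k), x, fun k => Pi.single s₀ (q k), fun _ _ => le_rfl,
      fun k => Pi.single_nonneg (α := fun _ => ℝ) |>.2 (hW' k), hopt.daOptimal_single s₀, ?_⟩
    simp [sum_pi_single']
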